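/- Let $T$ be a rooted tree in which every non-root vertex has at least two children, equipped with the visual metric $\bar\rho(x,y)=2^{-|x\wedge y|}$ on its boundary $\partial T$. If $(\partial T,\bar\rho)$ is Ahlfors $Q$-regular, then there exists $N$ such that every vertex of $T$ has at most $N$ children. -/

import Mathlib

/-!
For a vertex `l` at depth `n + 1 ≥ 2`, the boundaries `∂T(l x)` of its children are pairwise
disjoint balls of radius `2^{-(n+1)}`, all contained in `∂T(l)`, which is a ball of radius `2^{-n}`.
Ahlfors regularity gives each small ball measure at least `c 2^{-(n+1)Q}` and the big one at most
`C 2^{-nQ}`, so `l` has at most `C 2^Q / c` children. Depth `≥ 2` keeps these radii below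
`diam ∂T ≥ 1/2` (a vertex at depth one has two children); the finitely many vertices of depth
`≤ 1` are handled by local finiteness.
-/

open MeasureTheory Metric Set ENNReal NNReal

/-- Hausdorff measure of dimension `Q` computed from an explicit metric structure. -/
noncomputable def hMeas {Z : Type*} (m : MetricSpace Z) (Q : ℝ) (s : Set Z) : ℝ≥0∞ :=
  letI := m
  letI : MeasurableSpace Z := borel Z
  letI : BorelSpace Z := ⟨rfl⟩
  μH[Q] s

/-- `(Z, m)` is an Ahlfors `Q`-regular metric space. -/
def IsAhlfors {Z : Type*} (m : MetricSpace Z) (Q : ℝ) : Prop :=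
  letI := m
  ∃ c C : ℝ, 0 < c ∧ c < C ∧ ∀ z : Z, ∀ r : ℝ, 0 < r → r ≤ diam (univ : Set Z) →
    ENNReal.ofReal (c * r ^ Q) ≤ hMeas m Q (ball z r) ∧
      hMeas m Q (ball z r) ≤ ENNReal.ofReal (C * r ^ Q)

/-- Metric structure induced on a subset. -/
noncomputable def subMetric {Z : Type*} (m : MetricSpace Z) (Y : Set Z) : MetricSpace Y :=
  letI := m; inferInstance

/-- A rooted tree encoded as a prefix-closed, locally finite set of finite sequences,
with no leaves. -/
def IsTreeSet (V : Set (List ℕ)) : Prop :=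
  [] ∈ V ∧ (∀ l x, l ++ [x] ∈ V → l ∈ V) ∧
    ∀ l ∈ V, {x : ℕ | l ++ [x] ∈ V}.Finite ∧ {x : ℕ | l ++ [x] ∈ V}.Nonempty

/-- The children of a vertex. -/
def children (V : Set (List ℕ)) (l : List ℕ) : Set ℕ := {x : ℕ | l ++ [x] ∈ V}

/-- Every non-root vertex has at least two children. -/
def AtLeastTwo (V : Set (List ℕ)) : Prop :=
  ∀ l ∈ V, l ≠ [] → 2 ≤ (children V l).ncard

/-- The boundary of the tree: infinite rays from the root. -/
def tB (V : Set (List ℕ)) : Set (ℕ → ℕ) :=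
  {ξ | ∀ n : ℕ, (List.ofFn fun i : Fin n => ξ i) ∈ V}

/-- The visual metric `2 ^ (-|ξ ∧ η|)` on sequences. -/
noncomputable def visualMetric : MetricSpace (ℕ → ℕ) := PiNat.metricSpaceNatNat

/-- The boundary of a tree as a metric space, with the visual metric. -/
noncomputable def bMetric (V : Set (List ℕ)) : MetricSpace (tB V) :=
  subMetric visualMetric (tB V)

/-- The finite prefix of length `n` of a ray. -/
def rayPrefix (ξ : ℕ → ℕ) (n : ℕ) : List ℕ := List.ofFn fun i : Fin n => ξ i

/-- `∂T(l)`: the rays through the vertex `l`. -/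
def tBx (V : Set (List ℕ)) (l : List ℕ) : Set (tB V) :=
  {ξ : tB V | rayPrefix ξ.1 l.length = l}

/-- `S_k(l)`: the descendants of `l` at distance `k`. -/
def Sk (V : Set (List ℕ)) (l : List ℕ) (k : ℕ) : Set (List ℕ) :=
  {m : List ℕ | m ∈ V ∧ l <+: m ∧ m.length = l.length + k}

/-- A stopping set below the vertex `l`: a set of descendants of `l` whose subtree boundaries
partition `∂T(l)`. -/
def IsStop (V : Set (List ℕ)) (l : List ℕ) (S : Set (List ℕ)) : Prop :=
  (∀ y ∈ S, y ∈ V ∧ l <+: y) ∧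
    (S.Pairwise fun y z => tBx V y ∩ tBx V z = ∅) ∧
    (⋃ y ∈ S, tBx V y) = tBx V l

lemma IsTreeSet.mem_of_prefix {V : Set (List ℕ)} (hV : IsTreeSet V) {l p : List ℕ}
    (hl : l ∈ V) (hp : p <+: l) : p ∈ V := by
  induction l using List.reverseRecOn with
  | nil => rwa [List.prefix_nil.1 hp]
  | append_singleton m x ih =>
    rcases List.prefix_concat_iff.1 hp with rfl | hpm
    · exact hl
    · exact ih (hV.2.1 m x hl) hpm

lemma IsTreeSet.finite_setOf_length_le {V : Set (List ℕ)} (hV : IsTreeSet V) (k : ℕ) :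
    {l ∈ V | l.length ≤ k}.Finite := by
  induction k with
  | zero =>
    exact (finite_singleton []).subset fun l hl => List.length_eq_zero_iff.1 (Nat.le_zero.1 hl.2)
  | succ k ih =>
    refine (ih.union (ih.biUnion fun m hm => ((hV.2.2 m hm.1).1.image
      fun x => m ++ [x]))).subset ?_
    rintro l ⟨hl, hlen⟩
    rcases l.eq_nil_or_concat with rfl | ⟨m, x, rfl⟩
    · exact Or.inl ⟨hl, by simp⟩
    rw [List.concat_eq_append] at hl hlen ⊢
    rw [List.length_append, List.length_singleton] at hlen
    rcases Nat.lt_or_ge m.length k with hm | hm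
    · exact Or.inl ⟨hl, by rw [List.length_append, List.length_singleton]; omega⟩
    · exact Or.inr (mem_biUnion (x := m) ⟨hV.2.1 m x hl, by omega⟩ ⟨x, hl, rfl⟩)

noncomputable def descend (V : Set (List ℕ)) (l : List ℕ) (k : ℕ) : List ℕ :=
  (fun m => m ++ [Classical.epsilon (· ∈ children V m)])^[k] l

lemma descend_succ (V : Set (List ℕ)) (l : List ℕ) (k : ℕ) :
    descend V l (k + 1) = descend V l k ++ [Classical.epsilon (· ∈ children V (descend V l k))] :=
  Function.iterate_succ_apply' _ _ _

lemma IsTreeSet.descend_mem {V : Set (List ℕ)} (hV : IsTreeSet V) {l : List ℕ} (hl : l ∈ V)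
    (k : ℕ) : descend V l k ∈ V := by
  induction k with
  | zero => exact hl
  | succ k ih => rw [descend_succ]; exact Classical.epsilon_spec (hV.2.2 _ ih).2

lemma length_descend (V : Set (List ℕ)) (l : List ℕ) (k : ℕ) :
    (descend V l k).length = l.length + k := by
  induction k with
  | zero => rfl
  | succ k ih => rw [descend_succ, List.length_append, ih, List.length_singleton, add_assoc]

lemma descend_prefix_descend (V : Set (List ℕ)) (l : List ℕ) {j k : ℕ} (h : j ≤ k) :
    descend V l j <+: descend V l k := by
  induction k, h using Nat.le_induction with
  | base => exact List.prefix_refl _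
  | succ k _ ih => exact ih.trans (descend_succ V l k ▸ List.prefix_append _ _)

noncomputable def rayThrough (V : Set (List ℕ)) (l : List ℕ) (i : ℕ) : ℕ :=
  (descend V l (i + 1)).getD i 0

lemma rayPrefix_rayThrough (V : Set (List ℕ)) (l : List ℕ) (n : ℕ) :
    rayPrefix (rayThrough V l) n = (descend V l n).take n := by
  refine List.ext_getElem (by simp [rayPrefix, length_descend]) fun i hi _ => ?_
  have hi : i < n := by simpa [rayPrefix] using hi
  have hlen : i < (descend V l (i + 1)).length := by rw [length_descend]; omega
  simp only [rayPrefix, List.getElem_ofFn, List.getElem_take]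
  rw [rayThrough, List.getD_eq_getElem _ _ hlen]
  exact (descend_prefix_descend V l (by omega : i + 1 ≤ n)).getElem hlen

lemma IsTreeSet.tBx_nonempty {V : Set (List ℕ)} (hV : IsTreeSet V) {l : List ℕ} (hl : l ∈ V) :
    (tBx V l).Nonempty := by
  refine ⟨⟨rayThrough V l, fun n => ?_⟩, ?_⟩
  · change rayPrefix _ n ∈ V
    rw [rayPrefix_rayThrough]
    exact hV.mem_of_prefix (hV.descend_mem hl n) (List.take_prefix _ _)
  · change rayPrefix _ _ = l
    rw [rayPrefix_rayThrough]
    exact (List.prefix_iff_eq_take.1 (descend_prefix_descend V l (Nat.zero_le _))).symm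

lemma rayPrefix_eq_rayPrefix_iff {ξ η : ℕ → ℕ} {n : ℕ} :
    rayPrefix η n = rayPrefix ξ n ↔ η ∈ PiNat.cylinder ξ n := by
  simp only [rayPrefix, List.ofFn_inj, funext_iff, PiNat.mem_cylinder_iff, Fin.forall_iff]

lemma tBx_eq_preimage_cylinder {V : Set (List ℕ)} {l : List ℕ} {ξ : tB V} (hξ : ξ ∈ tBx V l) :
    tBx V l = Subtype.val ⁻¹' PiNat.cylinder ξ.1 l.length := by
  ext η
  rw [mem_preimage, ← rayPrefix_eq_rayPrefix_iff, hξ]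
  rfl

lemma tBx_append_subset (V : Set (List ℕ)) (l k : List ℕ) : tBx V (l ++ k) ⊆ tBx V l := by
  intro η hη
  change rayPrefix η.1 (l ++ k).length = l ++ k at hη
  rw [rayPrefix, List.length_append, List.ofFn_add] at hη
  exact (List.append_inj hη (by simp)).1

lemma disjoint_tBx {V : Set (List ℕ)} {l l' : List ℕ} (hlen : l.length = l'.length)
    (hne : l ≠ l') : Disjoint (tBx V l) (tBx V l') :=
  disjoint_left.2 fun _ hη hη' => hne (hη.symm.trans (hlen ▸ hη'))

lemma visualMetric_ball_eq_cylinder (ξ : ℕ → ℕ) (n : ℕ) :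
    @ball _ visualMetric.toPseudoMetricSpace ξ ((1 / 2) ^ n) = PiNat.cylinder ξ (n + 1) := by
  let := visualMetric
  ext η
  refine ⟨fun h i hi => PiNat.apply_eq_of_dist_lt h (Nat.lt_succ_iff.1 hi), fun h => ?_⟩
  calc dist η ξ ≤ (1 / 2) ^ (n + 1) := PiNat.mem_cylinder_iff_dist_le.1 h
    _ < (1 / 2) ^ n := pow_lt_pow_right_of_lt_one₀ (by norm_num) (by norm_num) n.lt_succ_self

lemma tBx_eq_ball {V : Set (List ℕ)} {l : List ℕ} {n : ℕ} (hl : l.length = n + 1) {ξ : tB V}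
    (hξ : ξ ∈ tBx V l) : tBx V l = @ball _ (bMetric V).toPseudoMetricSpace ξ ((1 / 2) ^ n) := by
  let := visualMetric
  rw [tBx_eq_preimage_cylinder hξ, hl, ← visualMetric_ball_eq_cylinder]
  exact Subtype.preimage_ball ξ _

lemma half_le_diam_tB {V : Set (List ℕ)} (hV : IsTreeSet V) (h2 : AtLeastTwo V) :
    1 / 2 ≤ @diam _ (bMetric V).toPseudoMetricSpace (univ : Set (tB V)) := by
  let := bMetric V
  obtain ⟨a, ha⟩ := (hV.2.2 [] hV.1).2
  have ha : [a] ∈ V := ha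
  obtain ⟨b, hb, b', hb', hne⟩ :=
    (one_lt_ncard (hV.2.2 [a] ha).1).1 (h2 [a] ha (List.cons_ne_nil a []))
  have hb : [a, b] ∈ V := hb
  have hb' : [a, b'] ∈ V := hb'
  obtain ⟨ξ, hξ⟩ := hV.tBx_nonempty hb
  obtain ⟨η, hη⟩ := hV.tBx_nonempty hb'
  have hdist : 1 / 2 ≤ dist η ξ := by
    have hη_not : η ∉ ball ξ ((1 / 2) ^ 1) := by
      rw [← tBx_eq_ball (l := [a, b]) (n := 1) rfl hξ]
      exact disjoint_left.1 (disjoint_tBx (l := [a, b']) (l' := [a, b]) rfl (by simp [hne.symm])) hη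
    simpa using hη_not
  refine hdist.trans (dist_le_diam_of_mem ?_ (mem_univ _) (mem_univ _))
  exact isBounded_iff.2 ⟨1, fun (x : tB V) _ (y : tB V) _ => PiNat.dist_le_one x.1 y.1⟩

lemma card_mul_le_measure_of_pairwiseDisjoint {α ι : Type*} [MeasurableSpace α] {μ : Measure α}
    {s : Finset ι} {B : ι → Set α} {A : Set α} {a : ℝ≥0∞}
    (hdisj : (s : Set ι).PairwiseDisjoint B) (hmeas : ∀ i ∈ s, MeasurableSet (B i))
    (hsub : ∀ i ∈ s, B i ⊆ A) (hlow : ∀ i ∈ s, a ≤ μ (B i)) : s.card * a ≤ μ A :=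
  calc (s.card : ℝ≥0∞) * a = s.card • a := (nsmul_eq_mul _ _).symm
    _ ≤ ∑ i ∈ s, μ (B i) := Finset.card_nsmul_le_sum s _ _ hlow
    _ = μ (⋃ i ∈ s, B i) := (measure_biUnion_finset hdisj hmeas).symm
    _ ≤ μ A := measure_mono (iUnion₂_subset hsub)

lemma IsAhlfors.exists_card_le {Z ι : Type*} [m : MetricSpace Z] {Q : ℝ} (h : IsAhlfors m Q) :
    ∃ N : ℕ, ∀ (s : Finset ι) (B : ι → Set Z) (w : Z) (r : ℝ), 0 < r →
      2 * r ≤ diam (univ : Set Z) → (∀ i ∈ s, ∃ z, B i = ball z r) →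
      (s : Set ι).PairwiseDisjoint B → (∀ i ∈ s, B i ⊆ ball w (2 * r)) → s.card ≤ N := by
  obtain ⟨c, C, hc, hcC, hball⟩ := h
  refine ⟨⌈C * 2 ^ Q / c⌉₊, fun s B w r hr hdiam hB hdisj hsub => ?_⟩
  let : MeasurableSpace Z := borel Z
  have : BorelSpace Z := ⟨rfl⟩
  have hmeasure : ∀ t, hMeas m Q t = μH[Q] t := fun _ => rfl
  have hcount : (s.card : ℝ≥0∞) * ENNReal.ofReal (c * r ^ Q) ≤ μH[Q] (ball w (2 * r)) := by
    refine card_mul_le_measure_of_pairwiseDisjoint hdisj (fun i hi => ?_) hsub fun i hi => ?_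
    · obtain ⟨z, hz⟩ := hB i hi
      exact hz ▸ measurableSet_ball
    · obtain ⟨z, hz⟩ := hB i hi
      rw [hz, ← hmeasure]
      exact (hball z r hr (by linarith)).1
  have hupper := (hball w (2 * r) (by positivity) hdiam).2
  rw [hmeasure] at hupper
  have hrQ : 0 < r ^ Q := Real.rpow_pos_of_pos hr Q
  have hreal : (s.card : ℝ) * (c * r ^ Q) ≤ C * 2 ^ Q * r ^ Q := by
    rw [Real.mul_rpow zero_le_two hr.le, ← mul_assoc] at hupper
    rw [← ENNReal.ofReal_natCast, ← ENNReal.ofReal_mul (Nat.cast_nonneg _)] at hcount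
    have hC : 0 < C := hc.trans hcC
    exact (ENNReal.ofReal_le_ofReal_iff (by positivity)).1 (hcount.trans hupper)
  have hcard : (s.card : ℝ) ≤ C * 2 ^ Q / c := by
    rw [le_div_iff₀ hc]
    nlinarith
  exact_mod_cast hcard.trans (Nat.le_ceil _)

lemma exists_ncard_children_le_of_two_le_length {V : Set (List ℕ)} (hV : IsTreeSet V)
    (h2 : AtLeastTwo V) {Q : ℝ} (hreg : IsAhlfors (bMetric V) Q) :
    ∃ N : ℕ, ∀ l ∈ V, 2 ≤ l.length → (children V l).ncard ≤ N := by
  let := bMetric V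
  obtain ⟨N, hN⟩ := hreg.exists_card_le (ι := ℕ)
  refine ⟨N, fun l hl hlen => ?_⟩
  obtain ⟨n, hn⟩ : ∃ n, l.length = n + 1 := ⟨l.length - 1, by omega⟩
  have hfin : (children V l).Finite := (hV.2.2 l hl).1
  obtain ⟨ξ, hξ⟩ := hV.tBx_nonempty hl
  have hradius : 2 * (1 / 2 : ℝ) ^ (n + 1) = (1 / 2) ^ n := by ring
  rw [ncard_eq_toFinset_card _ hfin]
  refine hN _ (fun x => tBx V (l ++ [x])) ξ ((1 / 2) ^ (n + 1)) (by positivity) ?_ ?_ ?_ ?_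
  · rw [hradius]
    exact (pow_le_pow_of_le_one (by norm_num) (by norm_num) (by omega : 1 ≤ n)).trans
      ((pow_one _).trans_le (half_le_diam_tB hV h2))
  · intro x hx
    obtain ⟨η, hη⟩ := hV.tBx_nonempty ((Finite.mem_toFinset hfin).1 hx)
    exact ⟨η, tBx_eq_ball (by simp [hn]) hη⟩
  · exact fun x _ y _ hxy => disjoint_tBx (by simp) (by simpa using hxy)
  · intro x _
    rw [hradius, ← tBx_eq_ball hn hξ]
    exact tBx_append_subset V l [x]

/-- if the boundary of a rooted tree (each non-root vertex having at least two
children) is Ahlfors `Q`-regular, then the number of children of each vertex is uniformly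
bounded. -/
theorem stmt2 (V : Set (List ℕ)) (hV : IsTreeSet V) (h2 : AtLeastTwo V) (Q : ℝ)
    (hreg : IsAhlfors (bMetric V) Q) :
    ∃ N : ℕ, ∀ l ∈ V, (children V l).ncard ≤ N := by
  obtain ⟨N₀, hN₀⟩ := exists_ncard_children_le_of_two_le_length hV h2 hreg
  obtain ⟨N₁, hN₁⟩ := ((hV.finite_setOf_length_le 1).image fun l => (children V l).ncard).bddAbove
  refine ⟨max N₀ N₁, fun l hl => ?_⟩
  rcases le_or_gt l.length 1 with hlen | hlen
  · exact le_max_of_le_right (hN₁ ⟨l, ⟨hl, hlen⟩, rfl⟩)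
  · exact le_max_of_le_left (hN₀ l hl hlen)
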